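/- Let n ≥ 1 be an integer, z ∈ ℂⁿ with z ≠ 0, and λ ∈ ℝ with −1 ≤ λ < 1. Then for every ξ ∈ ℂⁿ, the quantity Σ_{k,j,i,q=1}^n R_{kj̄iq̄}(z,λ)·ξ^k·conj(ξ^j)·ξ^i·conj(ξ^q) is a nonnegative real number; i.e., the metric ω_λ has non-negative holomorphic sectional curvature. -/

import Mathlib

open Finset ComplexConjugate

/-- `|z|² = Σₘ |zᵐ|²` for `z ∈ ℂⁿ`. -/
noncomputable def zsq {n : ℕ} (z : Fin n → ℂ) : ℝ := ∑ m, Complex.normSq (z m)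

/-- The Chern curvature tensor `R_{kj̄iq̄}(z,λ)` of the Hermitian metric `ω_λ`
(Lemma 2.1 of the paper). -/
noncomputable def Rten {n : ℕ} (z : Fin n → ℂ) (lam : ℝ) (k j i q : Fin n) : ℂ :=
  (if i = q then 1 else 0)
      * ((if j = k then ((zsq z : ℝ) : ℂ) else 0) - conj (z k) * z j) / ((zsq z : ℝ) : ℂ) ^ 3
    + (lam : ℂ) * ((if i = j then ((zsq z : ℝ) : ℂ) else 0) - conj (z i) * z j)
        * ((if k = q then ((zsq z : ℝ) : ℂ) else 0) - conj (z k) * z q) / ((zsq z : ℝ) : ℂ) ^ 4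
    + ((lam ^ 2 - 2 * lam : ℝ) : ℂ) * conj (z i) * z q
        * ((if k = j then ((zsq z : ℝ) : ℂ) else 0) - conj (z k) * z j) / ((zsq z : ℝ) : ℂ) ^ 4

lemma quadA {n : ℕ} (F G : Fin n → Fin n → ℂ) :
    ∑ k, ∑ j, ∑ i, ∑ q, F k j * G i q = (∑ k, ∑ j, F k j) * (∑ i, ∑ q, G i q) := by
  simp_rw [← Finset.mul_sum, ← Finset.sum_mul]

lemma quadB {n : ℕ} (F G : Fin n → Fin n → ℂ) :
    ∑ k, ∑ j, ∑ i, ∑ q, F i j * G k q = (∑ i, ∑ j, F i j) * (∑ k, ∑ q, G k q) := by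
  simp_rw [← Finset.mul_sum]
  simp_rw [← Finset.sum_mul]
  simp_rw [← Finset.mul_sum]
  rw [Finset.sum_comm]

lemma pair1 {n : ℕ} (z ξ : Fin n → ℂ) (A' : ℂ) :
    ∑ x : Fin n, ∑ y : Fin n,
      ((if x = y then A' else 0) - conj (z x) * z y) * (ξ x * conj (ξ y))
    = A' * ((∑ m, Complex.normSq (ξ m) : ℝ) : ℂ)
      - (∑ m, conj (z m) * ξ m) * conj (∑ m, conj (z m) * ξ m) := by
  simp only [sub_mul, Finset.sum_sub_distrib]
  congr 1
  · push_cast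
    simp [ite_mul, Finset.sum_ite_eq, Finset.mul_sum, Complex.mul_conj]
  · rw [map_sum, Finset.sum_mul_sum]
    apply Finset.sum_congr rfl; intro k _; apply Finset.sum_congr rfl; intro j _
    simp only [map_mul, Complex.conj_conj]
    ring

lemma pair2 {n : ℕ} (z ξ : Fin n → ℂ) (A' : ℂ) :
    ∑ x : Fin n, ∑ y : Fin n,
      ((if y = x then A' else 0) - conj (z x) * z y) * (ξ x * conj (ξ y))
    = A' * ((∑ m, Complex.normSq (ξ m) : ℝ) : ℂ)
      - (∑ m, conj (z m) * ξ m) * conj (∑ m, conj (z m) * ξ m) := by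
  rw [← pair1 z ξ A']
  apply Finset.sum_congr rfl; intro x _; apply Finset.sum_congr rfl; intro y _
  congr 2
  simp [eq_comm]

lemma pairDiag {n : ℕ} (ξ : Fin n → ℂ) :
    ∑ i : Fin n, ∑ q : Fin n, (if i = q then (1:ℂ) else 0) * (ξ i * conj (ξ q))
    = ((∑ m, Complex.normSq (ξ m) : ℝ) : ℂ) := by
  push_cast
  simp [ite_mul, Finset.sum_ite_eq, Complex.mul_conj]

lemma pairProd {n : ℕ} (z ξ : Fin n → ℂ) :
    ∑ i : Fin n, ∑ q : Fin n, conj (z i) * z q * (ξ i * conj (ξ q))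
    = (∑ m, conj (z m) * ξ m) * conj (∑ m, conj (z m) * ξ m) := by
  rw [map_sum, Finset.sum_mul_sum]
  apply Finset.sum_congr rfl; intro k _; apply Finset.sum_congr rfl; intro j _
  simp only [map_mul, Complex.conj_conj]
  ring

/-- For `z ≠ 0` and `−1 ≤ λ < 1`, for every `ξ ∈ ℂⁿ` the quantity
`Σ R_{kj̄iq̄}(z,λ) ξᵏ ξ̄ʲ ξⁱ ξ̄ᑫ` is a nonnegative real number; i.e. `ω_λ` has
non-negative holomorphic sectional curvature. -/
theorem sectional_nonneg (n : ℕ) (hn : 1 ≤ n) (z : Fin n → ℂ) (hz : z ≠ 0)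
    (lam : ℝ) (hlam0 : -1 ≤ lam) (hlam1 : lam < 1) (ξ : Fin n → ℂ) :
    ∃ r : ℝ, 0 ≤ r ∧
      ∑ k, ∑ j, ∑ i, ∑ q, Rten z lam k j i q * ξ k * conj (ξ j) * ξ i * conj (ξ q)
        = (r : ℂ) := by
  classical
  set A : ℝ := zsq z with hA
  set A' : ℂ := ((A : ℝ) : ℂ) with hA'
  set a : ℝ := ∑ m, Complex.normSq (ξ m) with ha
  set b : ℂ := ∑ m, conj (z m) * ξ m with hb
  set μ : ℂ := ((lam ^ 2 - 2 * lam : ℝ) : ℂ) with hμ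
  -- positivity of A
  have hA0 : 0 < A := by
    rw [hA, zsq]
    obtain ⟨m, hm⟩ : ∃ m, z m ≠ 0 := by
      by_contra h; push_neg at h; exact hz (funext h)
    exact Finset.sum_pos' (fun i _ => Complex.normSq_nonneg _)
      ⟨m, Finset.mem_univ m, Complex.normSq_pos.mpr hm⟩
  have ha0 : 0 ≤ a := Finset.sum_nonneg fun i _ => Complex.normSq_nonneg _
  -- the big sum computation
  have hC : ∑ k, ∑ j, ∑ i, ∑ q, Rten z lam k j i q * ξ k * conj (ξ j) * ξ i * conj (ξ q)
      = (A' * (a : ℂ) - b * conj b) * (a : ℂ) / A' ^ 3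
        + (lam : ℂ) * (A' * (a : ℂ) - b * conj b) ^ 2 / A' ^ 4
        + μ * (A' * (a : ℂ) - b * conj b) * (b * conj b) / A' ^ 4 := by
    have hpt : ∀ k j i q : Fin n,
        Rten z lam k j i q * ξ k * conj (ξ j) * ξ i * conj (ξ q)
        = (((if j = k then A' else 0) - conj (z k) * z j) * (ξ k * conj (ξ j)) / A' ^ 3)
            * ((if i = q then (1:ℂ) else 0) * (ξ i * conj (ξ q)))
          + ((lam : ℂ) * (((if i = j then A' else 0) - conj (z i) * z j) * (ξ i * conj (ξ j))) / A' ^ 4)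
            * (((if k = q then A' else 0) - conj (z k) * z q) * (ξ k * conj (ξ q)))
          + (μ * (((if k = j then A' else 0) - conj (z k) * z j) * (ξ k * conj (ξ j))) / A' ^ 4)
            * (conj (z i) * z q * (ξ i * conj (ξ q))) := by
      intro k j i q
      simp only [Rten, ← hA, ← hA', ← hμ]
      ring
    simp_rw [hpt]
    simp only [Finset.sum_add_distrib]
    rw [quadA, quadB, quadA]
    simp_rw [← Finset.sum_div, ← Finset.mul_sum]
    rw [pair2 z ξ A', pairDiag ξ, pair1 z ξ A', pairProd z ξ,
      ← ha, ← hb]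
    ring
  -- real reformulation
  have hbr : b * conj b = ((Complex.normSq b : ℝ) : ℂ) := Complex.mul_conj b
  set nb : ℝ := Complex.normSq b with hnb
  have hnb0 : 0 ≤ nb := Complex.normSq_nonneg b
  -- Cauchy–Schwarz
  have hcs : nb ≤ A * a := by
    let x : EuclideanSpace ℂ (Fin n) := WithLp.toLp 2 z
    let y : EuclideanSpace ℂ (Fin n) := WithLp.toLp 2 ξ
    have h1 : b = inner ℂ x y := by
      rw [hb, PiLp.inner_apply]
      simp [RCLike.inner_apply, x, y, mul_comm]
    have h2 : ‖(inner ℂ x y : ℂ)‖ ≤ ‖x‖ * ‖y‖ := norm_inner_le_norm x y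
    have hx : ‖x‖ ^ 2 = A := by
      rw [EuclideanSpace.norm_eq, Real.sq_sqrt (by positivity)]
      simp [hA, zsq, ← Complex.sq_norm, x]
    have hy : ‖y‖ ^ 2 = a := by
      rw [EuclideanSpace.norm_eq, Real.sq_sqrt (by positivity)]
      simp [ha, ← Complex.sq_norm, y]
    calc nb = ‖b‖ ^ 2 := by rw [hnb, Complex.normSq_eq_norm_sq]
      _ ≤ (‖x‖ * ‖y‖) ^ 2 := by
          rw [h1]
          exact pow_le_pow_left₀ (norm_nonneg _) h2 2
      _ = A * a := by rw [mul_pow, hx, hy]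
  have hC0 : 0 ≤ A * a - nb := by linarith
  have hin : 0 ≤ A * a + lam * (A * a - nb) + (lam ^ 2 - 2 * lam) * nb := by
    nlinarith [mul_nonneg (by linarith : (0:ℝ) ≤ 1 + lam) hC0, mul_nonneg (sq_nonneg (lam - 1)) hnb0]
  refine ⟨((A * a - nb) * (A * a + lam * (A * a - nb) + (lam ^ 2 - 2 * lam) * nb)) / A ^ 4,
    div_nonneg (mul_nonneg hC0 hin) (pow_nonneg hA0.le 4), ?_⟩
  rw [hC, hbr, hA', hμ]
  have hAne : (A : ℂ) ≠ 0 := by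
    exact_mod_cast (Complex.ofReal_ne_zero.mpr hA0.ne')
  push_cast
  field_simp
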